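/- Let p be a prime, 1 ≤ m ≤ n, and let F : ℤ_p^n → ℤ_p^m be a compatible function that is measure-preserving, i.e., μ_p^{⊗n}(F^{−1}(A)) = μ_p^{⊗m}(A) for every measurable A ⊆ ℤ_p^m. Then F is balanced modulo p^k for every k = 1, 2, 3, … -/

import Mathlib

open MeasureTheory Filter

/-- Borel measurable structure on the `p`-adic integers. -/
noncomputable instance padicMS (p : ℕ) [Fact p.Prime] : MeasurableSpace ℤ_[p] := borel _

instance padicBS (p : ℕ) [Fact p.Prime] : BorelSpace ℤ_[p] := ⟨rfl⟩

/-- The Haar measure `μ_p` on `ℤ_p`, normalized so that `μ_p(ℤ_p) = 1`. -/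
noncomputable def padicHaar (p : ℕ) [Fact p.Prime] : Measure ℤ_[p] :=
  Measure.addHaarMeasure (⊤ : TopologicalSpace.PositiveCompacts ℤ_[p])

/-- The map `f̄_k : ℤ/p^kℤ → ℤ/p^kℤ` induced by `f : ℤ_p → ℤ_p` via reduction
modulo `p^k` (well-defined whenever `f` is compatible, i.e. 1-Lipschitz). -/
noncomputable def modMap (p : ℕ) [Fact p.Prime] (f : ℤ_[p] → ℤ_[p]) (k : ℕ) :
    ZMod (p ^ k) → ZMod (p ^ k) :=
  fun z => PadicInt.toZModPow k (f ((z.val : ℕ) : ℤ_[p]))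

/-- The map `F̄_k : (ℤ/p^kℤ)^n → (ℤ/p^kℤ)^m` induced by `F : ℤ_p^n → ℤ_p^m` via
coordinatewise reduction modulo `p^k` (well-defined whenever `F` is compatible). -/
noncomputable def modMapV (p : ℕ) [Fact p.Prime] {n m : ℕ}
    (F : (Fin n → ℤ_[p]) → (Fin m → ℤ_[p])) (k : ℕ) :
    (Fin n → ZMod (p ^ k)) → (Fin m → ZMod (p ^ k)) :=
  fun v i => PadicInt.toZModPow k (F (fun j => ((v j).val : ℤ_[p])) i)

/-- The sphere `S_{p^{-r}}(y) = {z : ‖z - y‖ = p^{-r}}` in `ℤ_p`. -/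
def padicSphere (p : ℕ) [Fact p.Prime] (y : ℤ_[p]) (r : ℕ) : Set ℤ_[p] :=
  {z : ℤ_[p] | ‖z - y‖ = (p : ℝ) ^ (-(r : ℤ))}

/-- The probability measure on the sphere `S_{p^{-r}}(y)`, obtained by restricting the
normalized Haar measure `μ_p` to the sphere and normalizing. -/
noncomputable def sphereMeasure (p : ℕ) [Fact p.Prime] (y : ℤ_[p]) (r : ℕ) : Measure ℤ_[p] :=
  (padicHaar p (padicSphere p y r))⁻¹ • (padicHaar p).restrict (padicSphere p y r)

/-- `f` is ergodic on the sphere `S_{p^{-r}}(y)`: it maps the sphere into itself, preserves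
the normalized restriction of the Haar measure to the sphere, and every invariant
measurable subset of the sphere has normalized measure `0` or `1`. -/
def ErgodicOnSphere (p : ℕ) [Fact p.Prime] (f : ℤ_[p] → ℤ_[p]) (y : ℤ_[p]) (r : ℕ) : Prop :=
  Set.MapsTo f (padicSphere p y r) (padicSphere p y r) ∧
  (∀ A : Set ℤ_[p], MeasurableSet A →
      sphereMeasure p y r (f ⁻¹' A) = sphereMeasure p y r A) ∧
  (∀ A : Set ℤ_[p], MeasurableSet A → A ⊆ padicSphere p y r →
      f ⁻¹' A ∩ padicSphere p y r = A →
      sphereMeasure p y r A = 0 ∨ sphereMeasure p y r A = 1)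

/-- `d ∈ ℤ_p` is primitive modulo `p²`: its image in `ℤ/p²ℤ` generates the whole
group of units `(ℤ/p²ℤ)ˣ`. -/
def PrimitiveModSq (p : ℕ) [Fact p.Prime] (d : ℤ_[p]) : Prop :=
  ∃ u : (ZMod (p ^ 2))ˣ, (u : ZMod (p ^ 2)) = PadicInt.toZModPow 2 d ∧
    ∀ v : (ZMod (p ^ 2))ˣ, v ∈ Subgroup.zpowers u

/-!
Compatibility says that `F x mod p^k` depends only on `x mod p^k`, so the preimage under `F` of
the cylinder `{y | y ≡ v mod p^k}` is the disjoint union of the cylinders over the fibre of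
`F̄_k` above `v`. A cylinder of level `k` in `ℤ_p^N` has Haar measure `p^{-kN}`, so measure
preservation reads `#(F̄_k⁻¹ v) · p^{-kn} = p^{-km}`.
-/

open scoped ENNReal

theorem ENNReal.eq_pow_sub_of_mul_inv_pow_eq {a q : ℝ≥0∞} {m n : ℕ} (hq₀ : q ≠ 0) (hq : q ≠ ⊤)
    (hmn : m ≤ n) (h : a * q⁻¹ ^ n = q⁻¹ ^ m) : a = q ^ (n - m) := by
  rw [← Nat.sub_add_cancel hmn, pow_add, ← mul_assoc] at h
  have hm₀ : q⁻¹ ^ m ≠ 0 := pow_ne_zero _ (ENNReal.inv_ne_zero.2 hq)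
  have hm : q⁻¹ ^ m ≠ ⊤ := ENNReal.pow_ne_top (ENNReal.inv_ne_top.2 hq₀)
  have hrest : a * q⁻¹ ^ (n - m) = 1 := by
    simpa using (ENNReal.mul_left_inj hm₀ hm).1 (h.trans (one_mul _).symm)
  rw [ENNReal.eq_inv_of_mul_eq_one_left hrest, ← ENNReal.inv_pow, inv_inv]

namespace PadicInt

variable {p : ℕ} [Fact p.Prime]

instance : (padicHaar p).IsAddHaarMeasure := Measure.isAddHaarMeasure_addHaarMeasure _

theorem padicHaar_univ : padicHaar p Set.univ = 1 := by
  rw [← TopologicalSpace.PositiveCompacts.coe_top (α := ℤ_[p])]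
  exact Measure.addHaarMeasure_self

theorem toZModPow_eq_iff_norm_sub_le {k : ℕ} {x y : ℤ_[p]} :
    toZModPow k x = toZModPow k y ↔ ‖x - y‖ ≤ (p : ℝ) ^ (-(k : ℤ)) := by
  rw [norm_le_pow_iff_mem_span_pow, ← ker_toZModPow, RingHom.mem_ker, map_sub, sub_eq_zero]

theorem toZModPow_natCast_val (k : ℕ) (c : ZMod (p ^ k)) : toZModPow k (c.val : ℤ_[p]) = c := by
  rw [map_natCast, ZMod.natCast_zmod_val]

theorem toZModPow_preimage_singleton (k : ℕ) (a : ℤ_[p]) :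
    toZModPow k ⁻¹' {toZModPow k a} = Metric.closedBall a ((p : ℝ) ^ (-(k : ℤ))) := by
  ext x
  rw [Set.mem_preimage, Set.mem_singleton_iff, Metric.mem_closedBall, dist_eq_norm,
    toZModPow_eq_iff_norm_sub_le]

theorem measurableSet_toZModPow_preimage_singleton (k : ℕ) (c : ZMod (p ^ k)) :
    MeasurableSet (toZModPow k ⁻¹' {c}) := by
  rw [← toZModPow_natCast_val k c, toZModPow_preimage_singleton]
  exact measurableSet_closedBall

theorem padicHaar_toZModPow_preimage_singleton (k : ℕ) (c : ZMod (p ^ k)) :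
    padicHaar p (toZModPow k ⁻¹' {c}) = ((p : ℝ≥0∞) ^ k)⁻¹ := by
  have fiber_eq : ∀ c : ZMod (p ^ k), padicHaar p (toZModPow k ⁻¹' {c}) =
      padicHaar p (Metric.closedBall 0 ((p : ℝ) ^ (-(k : ℤ)))) := fun c => by
    rw [← toZModPow_natCast_val k c, toZModPow_preimage_singleton,
      Measure.addHaar_closedBall_center]
  have sum_fibers : ∑ c : ZMod (p ^ k), padicHaar p (toZModPow k ⁻¹' {c}) = 1 := by
    rw [sum_measure_preimage_singleton _
      fun c _ => measurableSet_toZModPow_preimage_singleton k c, Finset.coe_univ,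
      Set.preimage_univ, padicHaar_univ]
  simp only [fiber_eq, Finset.sum_const, Finset.card_univ, ZMod.card, nsmul_eq_mul] at sum_fibers
  rw [mul_comm] at sum_fibers
  rw [fiber_eq, ENNReal.eq_inv_of_mul_eq_one_left sum_fibers, Nat.cast_pow]

section Pi

variable {ι κ : Type*}

noncomputable def toZModPowPi (k : ℕ) (x : ι → ℤ_[p]) : ι → ZMod (p ^ k) :=
  fun i => toZModPow k (x i)

theorem toZModPowPi_eq_iff_norm_sub_le [Fintype ι] {k : ℕ} {x y : ι → ℤ_[p]} :
    toZModPowPi k x = toZModPowPi k y ↔ ‖x - y‖ ≤ (p : ℝ) ^ (-(k : ℤ)) := by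
  rw [pi_norm_le_iff_of_nonneg (by positivity), funext_iff]
  exact forall_congr' fun i => toZModPow_eq_iff_norm_sub_le

theorem toZModPowPi_apply_eq_of_compatible [Fintype ι] [Fintype κ]
    {F : (ι → ℤ_[p]) → κ → ℤ_[p]} (hF : ∀ x y, ‖F x - F y‖ ≤ ‖x - y‖) {k : ℕ} {x y : ι → ℤ_[p]}
    (h : toZModPowPi k x = toZModPowPi k y) : toZModPowPi k (F x) = toZModPowPi k (F y) :=
  toZModPowPi_eq_iff_norm_sub_le.2 <| (hF x y).trans <| toZModPowPi_eq_iff_norm_sub_le.1 h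

theorem toZModPowPi_preimage_singleton (k : ℕ) (w : ι → ZMod (p ^ k)) :
    toZModPowPi k ⁻¹' {w} = Set.univ.pi fun i => toZModPow k ⁻¹' {w i} := by
  ext x
  simp only [Set.mem_preimage, Set.mem_singleton_iff, Set.mem_univ_pi, funext_iff, toZModPowPi]

theorem measurableSet_toZModPowPi_preimage_singleton [Countable ι] (k : ℕ)
    (w : ι → ZMod (p ^ k)) :
    MeasurableSet (toZModPowPi k ⁻¹' {w}) := by
  rw [toZModPowPi_preimage_singleton]
  exact .univ_pi fun i => measurableSet_toZModPow_preimage_singleton k (w i)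

theorem measure_pi_toZModPowPi_preimage [Fintype ι] (k : ℕ) (S : Set (ι → ZMod (p ^ k))) :
    Measure.pi (fun _ : ι => padicHaar p) (toZModPowPi k ⁻¹' S) =
      Nat.card S * ((p : ℝ≥0∞) ^ k)⁻¹ ^ Fintype.card ι := by
  classical
  have fiber : ∀ w, Measure.pi (fun _ : ι => padicHaar p) (toZModPowPi k ⁻¹' {w}) =
      ((p : ℝ≥0∞) ^ k)⁻¹ ^ Fintype.card ι := fun w => by
    rw [toZModPowPi_preimage_singleton, Measure.pi_pi]
    simp only [padicHaar_toZModPow_preimage_singleton, Finset.prod_const, Finset.card_univ]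
  rw [← Set.coe_toFinset S, ← sum_measure_preimage_singleton _
    fun w _ => measurableSet_toZModPowPi_preimage_singleton k w]
  simp only [fiber, Finset.sum_const, nsmul_eq_mul, Nat.card_eq_card_toFinset,
    Finset.toFinset_coe]

end Pi

theorem modMapV_toZModPowPi {n m : ℕ} {F : (Fin n → ℤ_[p]) → Fin m → ℤ_[p]}
    (hF : ∀ x y, ‖F x - F y‖ ≤ ‖x - y‖) (k : ℕ) (x : Fin n → ℤ_[p]) :
    modMapV p F k (toZModPowPi k x) = toZModPowPi k (F x) :=
  toZModPowPi_apply_eq_of_compatible hF <| funext fun _ => toZModPow_natCast_val k _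

end PadicInt

theorem balanced_of_compatible_measurePreserving_general (p n m : ℕ) [Fact p.Prime]
    (hmn : m ≤ n)
    (F : (Fin n → ℤ_[p]) → (Fin m → ℤ_[p]))
    (hF : ∀ x y : Fin n → ℤ_[p], ‖F x - F y‖ ≤ ‖x - y‖)
    (hmp : ∀ A : Set (Fin m → ℤ_[p]), MeasurableSet A →
      (Measure.pi fun _ : Fin n => padicHaar p) (F ⁻¹' A) =
        (Measure.pi fun _ : Fin m => padicHaar p) A) :
    ∀ k : ℕ, 1 ≤ k → ∀ v : Fin m → ZMod (p ^ k),
      Nat.card {w : Fin n → ZMod (p ^ k) // modMapV p F k w = v} = p ^ (k * (n - m)) := by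
  intro k _ v
  have fiber_preimage : F ⁻¹' (PadicInt.toZModPowPi k ⁻¹' {v}) =
      PadicInt.toZModPowPi k ⁻¹' {w | modMapV p F k w = v} := by
    ext x
    change PadicInt.toZModPowPi k (F x) = v ↔ modMapV p F k (PadicInt.toZModPowPi k x) = v
    rw [PadicInt.modMapV_toZModPowPi hF]
  have hμ := hmp _ (PadicInt.measurableSet_toZModPowPi_preimage_singleton k v)
  rw [fiber_preimage, PadicInt.measure_pi_toZModPowPi_preimage,
    PadicInt.measure_pi_toZModPowPi_preimage, Nat.card_unique (α := ({v} : Set _)),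
    Nat.cast_one, one_mul, Fintype.card_fin, Fintype.card_fin] at hμ
  have hp : (p : ℝ≥0∞) ≠ 0 := by exact_mod_cast (Fact.out : p.Prime).ne_zero
  have hcard := ENNReal.eq_pow_sub_of_mul_inv_pow_eq (pow_ne_zero k hp)
    (ENNReal.pow_ne_top (ENNReal.natCast_ne_top p)) hmn hμ
  rw [← pow_mul] at hcard
  exact_mod_cast hcard

/-- A compatible measure-preserving function `F : ℤ_p^n → ℤ_p^m` (with `1 ≤ m ≤ n`) is
balanced modulo `p^k` for every `k ≥ 1`. -/
theorem balanced_of_compatible_measurePreserving (p n m : ℕ) [Fact p.Prime]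
    (hm : 1 ≤ m) (hmn : m ≤ n)
    (F : (Fin n → ℤ_[p]) → (Fin m → ℤ_[p]))
    (hF : ∀ x y : Fin n → ℤ_[p], ‖F x - F y‖ ≤ ‖x - y‖)
    (hmp : ∀ A : Set (Fin m → ℤ_[p]), MeasurableSet A →
      (Measure.pi fun _ : Fin n => padicHaar p) (F ⁻¹' A) =
        (Measure.pi fun _ : Fin m => padicHaar p) A) :
    ∀ k : ℕ, 1 ≤ k → ∀ v : Fin m → ZMod (p ^ k),
      Nat.card {w : Fin n → ZMod (p ^ k) // modMapV p F k w = v} = p ^ (k * (n - m)) :=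
  balanced_of_compatible_measurePreserving_general p n m hmn F hF hmp
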